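/- arXiv:1210.7132 — 5 statements merged into one kernel-verified Lean document; each statement's English description precedes it below -/
import Mathlib

section
/- If V is a 𝔅-module of the intermediate series, then L(α,i)·V = 0 for all α ∈ ℤ and all i ≥ 1; that is, the subalgebra 𝔅_[1] = span{L(α,i) : α ∈ ℤ, i ≥ 1} acts trivially, so V is simply a module of the intermediate series over the Virasoro subalgebra span{L(α,0) : α ∈ ℤ} ⊕ ℂC of 𝔅. -/
/-- The Lie algebra `𝔅` of Block type: a complex Lie algebra `B` equipped with a basis
`{L α i : α ∈ ℤ, i ∈ ℕ} ∪ {C}` where `C` is central and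
`[L α i, L β j] = ((i+1)β − (j+1)α)·L (α+β) (i+j) + δ_{α+β,0}·δ_{i+j,0}·((α³−α)/6)·C`. -/
structure BlockData (B : Type) [LieRing B] [LieAlgebra ℂ B] where
  L : ℤ → ℕ → B
  C : B
  central : ∀ x : B, ⁅C, x⁆ = 0
  bracket_L : ∀ (α β : ℤ) (i j : ℕ),
    ⁅L α i, L β j⁆
      = (((i : ℂ) + 1) * (β : ℂ) - ((j : ℂ) + 1) * (α : ℂ)) • L (α + β) (i + j)
        + (if α + β = 0 ∧ i + j = 0 then ((α : ℂ) ^ 3 - (α : ℂ)) / 6 else 0) • C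
  indep : LinearIndependent ℂ (Sum.elim (fun p : ℤ × ℕ => L p.1 p.2) (fun _ : Unit => C))
  span_top : Submodule.span ℂ
      (Set.range (Sum.elim (fun p : ℤ × ℕ => L p.1 p.2) (fun _ : Unit => C))) = ⊤

variable {B : Type} [LieRing B] [LieAlgebra ℂ B]
variable {V : Type} [AddCommGroup V] [Module ℂ V] [LieRingModule B V] [LieModule ℂ B V]

/-- A `ℤ`-grading `V = ⊕ₖ Vₖ` on a `𝔅`-module, compatible with the grading of `𝔅`:
`𝔅^(α)·Vₖ ⊆ V_{α+k}` (where `𝔅^(α) = span{L α i : i ≥ 0} ⊕ δ_{α,0} ℂ C`). -/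
structure GradedBMod (𝔟 : BlockData B) (V : Type) [AddCommGroup V] [Module ℂ V]
    [LieRingModule B V] [LieModule ℂ B V] where
  piece : ℤ → Submodule ℂ V
  isInternal : DirectSum.IsInternal piece
  lie_L_mem : ∀ (α : ℤ) (i : ℕ) (k : ℤ) (v : V), v ∈ piece k → ⁅𝔟.L α i, v⁆ ∈ piece (α + k)
  lie_C_mem : ∀ (k : ℤ) (v : V), v ∈ piece k → ⁅𝔟.C, v⁆ ∈ piece k

/-- A Lie submodule is graded if it is the (direct) sum of its intersections with the
graded pieces. -/
def GradedBMod.IsGradedSubmodule {𝔟 : BlockData B} (gr : GradedBMod 𝔟 V)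
    (W : LieSubmodule ℂ B V) : Prop :=
  (W : Submodule ℂ V) = ⨆ k : ℤ, (W : Submodule ℂ V) ⊓ gr.piece k

/-- A graded module is (graded-)irreducible if it is nonzero and has no graded submodule
other than `0` and `V`. -/
def GradedBMod.Irreducible {𝔟 : BlockData B} (gr : GradedBMod 𝔟 V) : Prop :=
  (∃ v : V, v ≠ 0) ∧
    ∀ W : LieSubmodule ℂ B V, gr.IsGradedSubmodule W → W = ⊥ ∨ W = ⊤

/-- Quasifinite: all graded pieces are finite dimensional. -/
def GradedBMod.Quasifinite {𝔟 : BlockData B} (gr : GradedBMod 𝔟 V) : Prop :=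
  ∀ k : ℤ, FiniteDimensional ℂ (gr.piece k)

/-- Uniformly bounded: the dimensions of the graded pieces are uniformly bounded. -/
def GradedBMod.UniformlyBounded {𝔟 : BlockData B} (gr : GradedBMod 𝔟 V) : Prop :=
  ∃ N : ℕ, ∀ k : ℤ, Module.rank ℂ (gr.piece k) ≤ N

/-- A module of the intermediate series: all graded pieces have dimension at most one. -/
def GradedBMod.IntermediateSeries {𝔟 : BlockData B} (gr : GradedBMod 𝔟 V) : Prop :=
  ∀ k : ℤ, Module.rank ℂ (gr.piece k) ≤ 1

/-- Highest weight module: generated by a nonzero `v ∈ V₀` which is a common eigenvector of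
all `L 0 i` and of `C` and is annihilated by all `L α i` with `α > 0`. -/
def GradedBMod.IsHighestWeight {𝔟 : BlockData B} (gr : GradedBMod 𝔟 V) : Prop :=
  ∃ v : V, v ≠ 0 ∧ v ∈ gr.piece 0 ∧
    (∀ i : ℕ, ∃ c : ℂ, ⁅𝔟.L 0 i, v⁆ = c • v) ∧ (∃ c : ℂ, ⁅𝔟.C, v⁆ = c • v) ∧
    (∀ α : ℤ, 0 < α → ∀ i : ℕ, ⁅𝔟.L α i, v⁆ = 0) ∧
    LieSubmodule.lieSpan ℂ B {v} = ⊤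

/-- Lowest weight module. -/
def GradedBMod.IsLowestWeight {𝔟 : BlockData B} (gr : GradedBMod 𝔟 V) : Prop :=
  ∃ v : V, v ≠ 0 ∧ v ∈ gr.piece 0 ∧
    (∀ i : ℕ, ∃ c : ℂ, ⁅𝔟.L 0 i, v⁆ = c • v) ∧ (∃ c : ℂ, ⁅𝔟.C, v⁆ = c • v) ∧
    (∀ α : ℤ, α < 0 → ∀ i : ℕ, ⁅𝔟.L α i, v⁆ = 0) ∧
    LieSubmodule.lieSpan ℂ B {v} = ⊤


/-!
On each graded piece `V_k` (of dimension at most one) `L(0,1)` acts by a scalar `μ k`, and the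
relation `[L(γ,i), L(0,1)] = -2γ L(γ,i+1)` shows that for `γ ≠ 0` the operators `L(γ,i)` act on
`V_k` as `c^i L(γ,0)` with `c = (μ (γ+k) - μ k) / 2γ`. Feeding this into
`[L(2γ,n), L(-γ,n)] = -3γ(n+1) L(γ,2n)` and comparing coefficients in the line `V_{γ+k}` gives
scalars with `p^n A - q^n B = -3γ(n+1) (c²)^n` for all `n`, and this forces `c = 0` whenever
`L(γ,0)` does not vanish on `V_k`. Hence `L(γ,i) = 0` for `γ ≠ 0, i ≥ 1`, and finally
`L(0,i)` is a nonzero multiple of `[L(1,i), L(-1,0)]`.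
-/

theorem Submodule.exists_smul_eq_of_rank_le_one {K M : Type*} [Field K] [AddCommGroup M]
    [Module K M] {W : Submodule K M} (hW : Module.rank K W ≤ 1) {x y : M} (hx : x ∈ W)
    (hy : y ∈ W) (hx₀ : x ≠ 0) : ∃ t : K, t • x = y := by
  obtain ⟨v₀, -, hle⟩ := (rank_submodule_le_one_iff W).mp hW
  obtain ⟨a, rfl⟩ := mem_span_singleton.mp (hle hx)
  obtain ⟨b, rfl⟩ := mem_span_singleton.mp (hle hy)
  have ha : a ≠ 0 := by rintro rfl; exact hx₀ (zero_smul K v₀)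
  exact ⟨b / a, by rw [smul_smul, div_mul_cancel₀ b ha]⟩

theorem Submodule.exists_forall_apply_eq_smul_of_rank_le_one {K M : Type*} [Field K]
    [AddCommGroup M] [Module K M] {W : Submodule K M} (hW : Module.rank K W ≤ 1)
    (f : M →ₗ[K] M) (hf : ∀ v ∈ W, f v ∈ W) : ∃ m : K, ∀ v ∈ W, f v = m • v := by
  obtain ⟨v₀, hv₀, hle⟩ := (rank_submodule_le_one_iff W).mp hW
  obtain ⟨m, hm⟩ := mem_span_singleton.mp (hle (hf v₀ hv₀))
  refine ⟨m, fun v hv => ?_⟩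
  obtain ⟨a, rfl⟩ := mem_span_singleton.mp (hle hv)
  rw [map_smul, ← hm, smul_comm]

/-- The left side satisfies the recurrence `s (n+2) = (p+q) s (n+1) - p q s n`, whose
characteristic roots are `p` and `q`; the right side satisfies it only if `p = q = d`,
and then the equations for `n = 0, 1` give `e d = 0`. -/
theorem eq_zero_of_pow_mul_sub_pow_mul_eq_succ_mul_pow {R : Type*} [CommRing R] [IsDomain R]
    {A B p q e d : R} (he : e ≠ 0)
    (h : ∀ n : ℕ, n < 4 → p ^ n * A - q ^ n * B = ((n : R) + 1) * e * d ^ n) : d = 0 := by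
  have h0 := h 0 (by norm_num)
  have h1 := h 1 (by norm_num)
  have h2 := h 2 (by norm_num)
  have h3 := h 3 (by norm_num)
  push_cast at h0 h1 h2 h3
  by_contra hd
  have hr₀ : 3 * d ^ 2 - 2 * (p + q) * d + p * q = 0 := by
    refine (mul_eq_zero.mp ?_).resolve_left he
    linear_combination (p + q) * h1 - h2 - p * q * h0
  have hr₁ : 4 * d ^ 2 - 3 * (p + q) * d + 2 * p * q = 0 := by
    refine ((mul_eq_zero.mp ?_).resolve_left (mul_ne_zero he hd))
    linear_combination (p + q) * h2 - h3 - p * q * h1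
  have hsum : p + q = 2 * d := by
    have : d * (p + q - 2 * d) = 0 := by linear_combination hr₁ - 2 * hr₀
    linear_combination (mul_eq_zero.mp this).resolve_left hd
  have hp : p = d := by
    have : (p - d) ^ 2 = 0 := by linear_combination (p - 2 * d) * hsum - hr₀
    exact sub_eq_zero.mp (pow_eq_zero_iff two_ne_zero |>.mp this)
  have hq : q = d := by linear_combination hsum - hp
  exact hd ((mul_eq_zero.mp (by linear_combination d * h0 - h1 + A * hp - B * hq :
    e * d = 0)).resolve_left he)

theorem BlockData.lie_L_lie_L_sub (𝔟 : BlockData B) (α β : ℤ) (i j : ℕ) (v : V) :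
    ⁅𝔟.L α i, ⁅𝔟.L β j, v⁆⁆ - ⁅𝔟.L β j, ⁅𝔟.L α i, v⁆⁆
      = (((i : ℂ) + 1) * β - ((j : ℂ) + 1) * α) • ⁅𝔟.L (α + β) (i + j), v⁆
        + (if α + β = 0 ∧ i + j = 0 then ((α : ℂ) ^ 3 - α) / 6 else 0) • ⁅𝔟.C, v⁆ := by
  rw [← lie_lie, 𝔟.bracket_L, add_lie, smul_lie, smul_lie]

theorem BlockData.lie_L_zero_eq_zero_of_lie_L_one_eq_zero (𝔟 : BlockData B) {i : ℕ}
    (h : ∀ w : V, ⁅𝔟.L 1 i, w⁆ = 0) (v : V) : ⁅𝔟.L 0 i, v⁆ = 0 := by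
  have hrel := 𝔟.lie_L_lie_L_sub 1 (-1) i 0 v
  rw [h, h, lie_zero, sub_zero] at hrel
  norm_num at hrel
  refine (smul_eq_zero.mp hrel.symm).resolve_left fun hc => ?_
  have : ((i + 2 : ℕ) : ℂ) ≠ 0 := Nat.cast_ne_zero.mpr (Nat.succ_ne_zero _)
  exact this (by push_cast; linear_combination -hc)

theorem GradedBMod.lie_eq_zero_of_forall_mem_piece {𝔟 : BlockData B} (gr : GradedBMod 𝔟 V)
    {x : B} (h : ∀ k, ∀ v ∈ gr.piece k, ⁅x, v⁆ = 0) (v : V) : ⁅x, v⁆ = 0 := by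
  have hle : ⨆ k, gr.piece k ≤ LinearMap.ker (LieModule.toEnd ℂ B V x) :=
    iSup_le fun k v hv => h k v hv
  rw [gr.isInternal.submodule_iSup_eq_top] at hle
  exact hle Submodule.mem_top

theorem GradedBMod.IntermediateSeries.exists_eigenvalues {𝔟 : BlockData B}
    {gr : GradedBMod 𝔟 V} (hint : gr.IntermediateSeries) (x : B)
    (hx : ∀ k, ∀ v ∈ gr.piece k, ⁅x, v⁆ ∈ gr.piece k) :
    ∃ μ : ℤ → ℂ, ∀ k, ∀ v ∈ gr.piece k, ⁅x, v⁆ = μ k • v :=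
  ⟨_, fun k => (Submodule.exists_forall_apply_eq_smul_of_rank_le_one (hint k)
    (LieModule.toEnd ℂ B V x) (hx k)).choose_spec⟩

/-- The factor `c` of the header: with `μ k` the eigenvalue of `L(0,1)` on `V_k`, `L(γ,i+1)`
acts on `V_k` as `c` times `L(γ,i)`. -/
noncomputable def stepFactor (μ : ℤ → ℂ) (γ k : ℤ) : ℂ := (μ (γ + k) - μ k) / (2 * γ)

namespace GradedBMod

variable {𝔟 : BlockData B} (gr : GradedBMod 𝔟 V) {μ : ℤ → ℂ}
  (hμ : ∀ k, ∀ v ∈ gr.piece k, ⁅𝔟.L 0 1, v⁆ = μ k • v)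
include hμ

theorem lie_L_succ {γ k : ℤ} (hγ : γ ≠ 0) {v : V} (hv : v ∈ gr.piece k) (i : ℕ) :
    ⁅𝔟.L γ (i + 1), v⁆ = stepFactor μ γ k • ⁅𝔟.L γ i, v⁆ := by
  have hrel := 𝔟.lie_L_lie_L_sub γ 0 i 1 v
  rw [if_neg (by omega), zero_smul, add_zero, hμ k v hv, lie_smul,
    hμ _ _ (gr.lie_L_mem γ i k v hv), add_zero, ← sub_smul] at hrel
  have h2γ : (2 * γ : ℂ) ≠ 0 := mul_ne_zero two_ne_zero (Int.cast_ne_zero.mpr hγ)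
  rw [← smul_right_inj (neg_ne_zero.mpr h2γ), smul_smul, stepFactor]
  convert hrel.symm using 2
  · push_cast; ring
  · field_simp; ring

theorem lie_L_eq_stepFactor_pow_smul {γ k : ℤ} (hγ : γ ≠ 0) {v : V} (hv : v ∈ gr.piece k)
    (i : ℕ) : ⁅𝔟.L γ i, v⁆ = stepFactor μ γ k ^ i • ⁅𝔟.L γ 0, v⁆ := by
  induction i with
  | zero => rw [pow_zero, one_smul]
  | succ i ih => rw [gr.lie_L_succ hμ hγ hv, ih, smul_smul, pow_succ']

theorem stepFactor_pow_smul_lie_L_lie_L_sub {α β k : ℤ} (hα : α ≠ 0) (hβ : β ≠ 0)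
    (hαβ : α + β ≠ 0) {v : V} (hv : v ∈ gr.piece k) (n : ℕ) :
    (stepFactor μ β k * stepFactor μ α (β + k)) ^ n • ⁅𝔟.L α 0, ⁅𝔟.L β 0, v⁆⁆
      - (stepFactor μ α k * stepFactor μ β (α + k)) ^ n • ⁅𝔟.L β 0, ⁅𝔟.L α 0, v⁆⁆
      = (((n : ℂ) + 1) * (β - α) * (stepFactor μ (α + β) k ^ 2) ^ n) •
          ⁅𝔟.L (α + β) 0, v⁆ := by
  have hrel := 𝔟.lie_L_lie_L_sub α β n n v
  rw [if_neg fun h => hαβ h.1, zero_smul, add_zero,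
    gr.lie_L_eq_stepFactor_pow_smul hμ hβ hv, lie_smul,
    gr.lie_L_eq_stepFactor_pow_smul hμ hα (gr.lie_L_mem β 0 k v hv),
    gr.lie_L_eq_stepFactor_pow_smul hμ hα hv, lie_smul,
    gr.lie_L_eq_stepFactor_pow_smul hμ hβ (gr.lie_L_mem α 0 k v hv),
    gr.lie_L_eq_stepFactor_pow_smul hμ hαβ hv, smul_smul, smul_smul, smul_smul] at hrel
  rwa [mul_pow, mul_pow, ← pow_mul, two_mul, mul_sub]

theorem stepFactor_eq_zero_or_lie_L_eq_zero (hint : gr.IntermediateSeries) {γ k : ℤ}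
    (hγ : γ ≠ 0) {v : V} (hv : v ∈ gr.piece k) :
    stepFactor μ γ k = 0 ∨ ⁅𝔟.L γ 0, v⁆ = 0 := by
  refine or_iff_not_imp_right.mpr fun hw => ?_
  have hmem : ∀ α β : ℤ, α + β = γ → ⁅𝔟.L α 0, ⁅𝔟.L β 0, v⁆⁆ ∈ gr.piece (γ + k) := by
    intro α β h
    have := gr.lie_L_mem α 0 _ _ (gr.lie_L_mem β 0 k v hv)
    rwa [← add_assoc, h] at this
  obtain ⟨a, ha⟩ := Submodule.exists_smul_eq_of_rank_le_one (hint (γ + k))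
    (gr.lie_L_mem γ 0 k v hv) (hmem (2 * γ) (-γ) (by ring)) hw
  obtain ⟨b, hb⟩ := Submodule.exists_smul_eq_of_rank_le_one (hint (γ + k))
    (gr.lie_L_mem γ 0 k v hv) (hmem (-γ) (2 * γ) (by ring)) hw
  have hcoeff : ∀ n : ℕ, n < 4 →
      (stepFactor μ (-γ) k * stepFactor μ (2 * γ) (-γ + k)) ^ n * a
        - (stepFactor μ (2 * γ) k * stepFactor μ (-γ) (2 * γ + k)) ^ n * b
        = ((n : ℂ) + 1) * (-3 * γ) * (stepFactor μ γ k ^ 2) ^ n := by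
    intro n _
    have h := gr.stepFactor_pow_smul_lie_L_lie_L_sub hμ (mul_ne_zero two_ne_zero hγ)
      (neg_ne_zero.mpr hγ) (by omega) hv n
    rw [← ha, ← hb, smul_smul, smul_smul, ← sub_smul, show 2 * γ + -γ = γ by ring] at h
    refine smul_left_injective ℂ hw (h.trans ?_)
    congr 1
    push_cast
    ring
  have h3γ : (-3 * γ : ℂ) ≠ 0 := mul_ne_zero (by norm_num) (Int.cast_ne_zero.mpr hγ)
  exact pow_eq_zero_iff two_ne_zero |>.mp
    (eq_zero_of_pow_mul_sub_pow_mul_eq_succ_mul_pow h3γ hcoeff)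

theorem lie_L_eq_zero_of_ne_zero (hint : gr.IntermediateSeries) {γ k : ℤ} (hγ : γ ≠ 0)
    {i : ℕ} (hi : 1 ≤ i) {v : V} (hv : v ∈ gr.piece k) : ⁅𝔟.L γ i, v⁆ = 0 := by
  rw [gr.lie_L_eq_stepFactor_pow_smul hμ hγ hv]
  rcases gr.stepFactor_eq_zero_or_lie_L_eq_zero hμ hint hγ hv with h | h
  · rw [h, zero_pow (by omega), zero_smul]
  · rw [h, smul_zero]

end GradedBMod

/-- If `V` is a `𝔅`-module of the intermediate series, then `L(α,i)·V = 0` for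
all `α ∈ ℤ` and all `i ≥ 1`; that is, the subalgebra `𝔅_[1] = span{L(α,i) : i ≥ 1}` acts
trivially, so `V` is simply a module of the intermediate series over the Virasoro subalgebra
`span{L(α,0) : α ∈ ℤ} ⊕ ℂC` of `𝔅`. -/
theorem block_intermediate_series_is_virasoro_module
    (𝔟 : BlockData B) (gr : GradedBMod 𝔟 V) (hint : gr.IntermediateSeries) :
    ∀ (α : ℤ) (i : ℕ), 1 ≤ i → ∀ v : V, ⁅𝔟.L α i, v⁆ = 0 := by
  obtain ⟨μ, hμ⟩ := hint.exists_eigenvalues (𝔟.L 0 1) fun k v hv => by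
    simpa only [zero_add] using gr.lie_L_mem 0 1 k v hv
  have hne : ∀ γ ≠ 0, ∀ i, 1 ≤ i → ∀ v : V, ⁅𝔟.L γ i, v⁆ = 0 := fun γ hγ i hi =>
    gr.lie_eq_zero_of_forall_mem_piece fun _ _ hv =>
      gr.lie_L_eq_zero_of_ne_zero hμ hint hγ hi hv
  intro α i hi
  rcases eq_or_ne α 0 with rfl | hα
  · exact 𝔟.lie_L_zero_eq_zero_of_lie_L_one_eq_zero (hne 1 one_ne_zero i hi)
  · exact hne α hα i hi
end

section
/- Let V be an irreducible uniformly bounded ℤ-graded 𝔅-module. Then there exists j ≥ 0 such that 𝔅_[j+1]·V = 0, where 𝔅_[m] = span{L(α,i) : α ∈ ℤ, i ≥ m}. -/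
variable {B : Type} [LieRing B] [LieAlgebra ℂ B]
variable {V : Type} [AddCommGroup V] [Module ℂ V] [LieRingModule B V] [LieModule ℂ B V]

/-- The subspace `𝔅_[m] = span{L(α,i) : α ∈ ℤ, i ≥ m}` of `𝔅`. -/
def BlockData.filt (𝔟 : BlockData B) (m : ℕ) : Submodule ℂ B :=
  Submodule.span ℂ {x : B | ∃ (α : ℤ) (i : ℕ), m ≤ i ∧ x = 𝔟.L α i}

/-!
Let `dim V_k ≤ N` for all `k`. For `α ≠ 0` the polynomials `f = ∑ fₙ Xⁿ` for which
`∑ fₙ L(α,n)` kills `V_k` form an ideal of `ℂ[X]`, since `ad L(0,1)` acts as `2α` times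
multiplication by `X`; as `Hom(V_k, V_{α+k})` has dimension at most `N²`, this ideal contains a
nonzero polynomial of degree at most `N²`. Bracketing with `L(β,0)` turns `f` into
`α f - β (X f)'`, and this raises the multiplicity of a nonzero root `μ`: if the ideal of
`(β+α, k)` lies in `((X-μ)^e)`, then the ideal of `(α,k)` or that of `(α,β+k)` lies in
`((X-μ)^(e+1))`. Iterating contradicts the degree bound, so each ideal is generated by a power of
`X` of degree at most `N²`, i.e. `L(α,i)` acts trivially for `i ≥ N²`. Finally `L(0,i)` is a
nonzero multiple of `⁅L(1,a), L(-1,b)⁆` with `a + b = i`.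
-/

open Polynomial

namespace Polynomial

variable {K : Type*} [Field K]

theorem exists_ne_zero_natDegree_le_finrank_apply_eq_zero {W : Type*} [AddCommGroup W] [Module K W]
    [FiniteDimensional K W] (Φ : K[X] →ₗ[K] W) :
    ∃ f ≠ 0, f.natDegree ≤ Module.finrank K W ∧ Φ f = 0 := by
  set d := Module.finrank K W
  have hlt : d < Module.finrank K (degreeLT K (d + 1)) := by
    rw [(degreeLTEquiv K (d + 1)).finrank_eq, Module.finrank_fin_fun]
    exact d.lt_succ_self
  obtain ⟨⟨f, hf⟩, hker, hf0⟩ :=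
    Submodule.exists_mem_ne_zero_of_ne_bot ((Φ.domRestrict _).ker_ne_bot_of_finrank_lt hlt)
  have hf0' : f ≠ 0 := fun h => hf0 (Subtype.ext h)
  exact ⟨f, hf0', Nat.lt_succ_iff.mp ((natDegree_lt_iff_degree_lt hf0').mpr (mem_degreeLT.mp hf)),
    hker⟩

theorem le_span_pow_or_le_span_pow_of_inf_le {I J : Ideal K[X]} {μ : K} {n : ℕ}
    (h : I ⊓ J ≤ Ideal.span {(X - C μ) ^ n}) :
    I ≤ Ideal.span {(X - C μ) ^ n} ∨ J ≤ Ideal.span {(X - C μ) ^ n} := by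
  by_contra! hIJ
  simp only [SetLike.not_le_iff_exists, Ideal.mem_span_singleton] at hIJ
  obtain ⟨⟨f, hfI, hf⟩, ⟨g, hgJ, hg⟩⟩ := hIJ
  have hf0 : f ≠ 0 := by rintro rfl; exact hf (dvd_zero _)
  have hg0 : g ≠ 0 := by rintro rfl; exact hg (dvd_zero _)
  obtain ⟨f', hff', hf'⟩ := exists_eq_pow_rootMultiplicity_mul_and_not_dvd f hf0 μ
  obtain ⟨g', hgg', hg'⟩ := exists_eq_pow_rootMultiplicity_mul_and_not_dvd g hg0 μ
  set a := rootMultiplicity μ f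
  set b := rootMultiplicity μ g
  have ha : a < n := not_le.mp (mt (le_rootMultiplicity_iff hf0).mp hf)
  have hb : b < n := not_le.mp (mt (le_rootMultiplicity_iff hg0).mp hg)
  have hI : (X - C μ) ^ max a b * (f' * g') ∈ I := by
    have : (X - C μ) ^ max a b * (f' * g') = f * ((X - C μ) ^ (max a b - a) * g') := by
      rw [hff', ← pow_mul_pow_sub _ (le_max_left a b)]
      ring
    rw [this]
    exact Ideal.mul_mem_right _ _ hfI
  have hJ : (X - C μ) ^ max a b * (f' * g') ∈ J := by
    have : (X - C μ) ^ max a b * (f' * g') = g * ((X - C μ) ^ (max a b - b) * f') := by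
      rw [hgg', ← pow_mul_pow_sub _ (le_max_right a b)]
      ring
    rw [this]
    exact Ideal.mul_mem_right _ _ hgJ
  have hdvd := (pow_dvd_pow _ (max_lt ha hb)).trans (Ideal.mem_span_singleton.mp (h ⟨hI, hJ⟩))
  rw [pow_succ, mul_dvd_mul_iff_left (pow_ne_zero _ (X_sub_C_ne_zero μ))] at hdvd
  exact ((prime_X_sub_C μ).dvd_or_dvd hdvd).elim hf' hg'

theorem pow_succ_dvd_of_pow_dvd_smul_sub_derivative [CharZero K] {μ a b : K} (hμ : μ ≠ 0)
    (hb : b ≠ 0) {e : ℕ} (he : e ≠ 0) {q : K[X]}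
    (h₁ : (X - C μ) ^ e ∣ a • q - b • derivative (X * q))
    (h₂ : (X - C μ) ^ e ∣ a • (X * q) - b • derivative (X * (X * q))) :
    (X - C μ) ^ (e + 1) ∣ q := by
  have hXq : (X - C μ) ^ e ∣ X * q := by
    have hid : X * (a • q - b • derivative (X * q)) - (a • (X * q) - b • derivative (X * (X * q)))
        = C b * (X * q) := by
      simp only [smul_eq_C_mul, derivative_mul, derivative_X]
      ring
    have := dvd_sub (dvd_mul_of_dvd_right h₁ X) h₂
    rw [hid] at this
    exact (isUnit_C.mpr hb.isUnit).dvd_mul_left.mp this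
  have hcop : IsCoprime ((X - C μ) ^ e) (X - C 0) :=
    (isCoprime_X_sub_C_of_isUnit_sub ((sub_zero μ).symm ▸ hμ.isUnit)).pow_left
  rw [map_zero, sub_zero] at hcop
  obtain ⟨s, rfl⟩ := hcop.dvd_of_dvd_mul_left hXq
  have hder : (X - C μ) ^ e ∣ derivative (X * ((X - C μ) ^ e * s)) := by
    have h₀ : (X - C μ) ^ e ∣ a • ((X - C μ) ^ e * s) := by
      rw [smul_eq_C_mul]
      exact dvd_mul_of_dvd_right (dvd_mul_right _ _) _
    have := dvd_sub h₀ h₁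
    rw [sub_sub_cancel, smul_eq_C_mul] at this
    exact (isUnit_C.mpr hb.isUnit).dvd_mul_left.mp this
  have hexp : derivative (X * ((X - C μ) ^ e * s))
      = (X - C μ) ^ (e - 1) * (C (e : K) * (X * s)) + (X - C μ) ^ e * derivative (X * s) := by
    rw [show X * ((X - C μ) ^ e * s) = (X - C μ) ^ e * (X * s) by ring, derivative_mul,
      derivative_X_sub_C_pow]
    ring
  rw [hexp, dvd_add_left (dvd_mul_right _ _), ← pow_sub_one_mul he,
    mul_dvd_mul_iff_left (pow_ne_zero _ (X_sub_C_ne_zero μ)), dvd_iff_isRoot] at hder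
  rw [pow_succ]
  refine mul_dvd_mul_left _ (dvd_iff_isRoot.mpr ?_)
  simpa [he, hμ] using hder

theorem dvd_X_pow_natDegree_of_isRoot_imp_eq_zero [IsAlgClosed K] {p : K[X]} (hp : p ≠ 0)
    (h : ∀ a, p.IsRoot a → a = 0) : p ∣ X ^ p.natDegree := by
  have hroots : p.roots = Multiset.replicate p.natDegree 0 := by
    rw [← IsAlgClosed.card_roots_eq_natDegree]
    exact Multiset.eq_replicate_card.mpr fun a ha => h a (isRoot_of_mem_roots ha)
  have hp' :=
    C_leadingCoeff_mul_prod_multiset_X_sub_C (IsAlgClosed.card_roots_eq_natDegree (p := p))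
  rw [hroots] at hp'
  simp only [Multiset.map_replicate, map_zero, sub_zero, Multiset.prod_replicate] at hp'
  calc p = C p.leadingCoeff * X ^ p.natDegree := hp'.symm
    _ ∣ X ^ p.natDegree :=
      (isUnit_C.mpr (leadingCoeff_ne_zero.mpr hp).isUnit).mul_left_dvd.mpr dvd_rfl

end Polynomial

namespace BlockData

variable (𝔟 : BlockData B)

noncomputable def Lpoly (α : ℤ) : ℂ[X] →ₗ[ℂ] B :=
  lsum fun n => LinearMap.toSpanSingleton ℂ B (𝔟.L α n)

@[simp]
theorem Lpoly_monomial (α : ℤ) (n : ℕ) (c : ℂ) : 𝔟.Lpoly α (monomial n c) = c • 𝔟.L α n := by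
  simp [Lpoly]

theorem Lpoly_X_pow (α : ℤ) (n : ℕ) : 𝔟.Lpoly α (X ^ n) = 𝔟.L α n := by
  rw [X_pow_eq_monomial, Lpoly_monomial, one_smul]

theorem lie_L_L_eq_smul {α β : ℤ} {i j : ℕ} (h : ¬(α + β = 0 ∧ i + j = 0)) :
    ⁅𝔟.L α i, 𝔟.L β j⁆ = (((i : ℂ) + 1) * β - ((j : ℂ) + 1) * α) • 𝔟.L (α + β) (i + j) := by
  rw [𝔟.bracket_L, if_neg h, zero_smul, add_zero]

theorem lie_L_zero_one_Lpoly (α : ℤ) (f : ℂ[X]) :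
    ⁅𝔟.L 0 1, 𝔟.Lpoly α f⁆ = (2 * α : ℂ) • 𝔟.Lpoly α (X * f) := by
  induction f using Polynomial.induction_on' with
  | add p q hp hq => rw [map_add, lie_add, hp, hq, mul_add, map_add, smul_add]
  | monomial n c =>
    rw [Lpoly_monomial, lie_smul, 𝔟.lie_L_L_eq_smul (by omega), X_mul_monomial, Lpoly_monomial,
      zero_add, add_comm 1 n, smul_smul, smul_smul]
    congr 1
    push_cast
    ring

theorem lie_L_zero_Lpoly {α β : ℤ} (h : β + α ≠ 0) (f : ℂ[X]) :
    ⁅𝔟.L β 0, 𝔟.Lpoly α f⁆ = 𝔟.Lpoly (β + α) ((α : ℂ) • f - (β : ℂ) • derivative (X * f)) := by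
  induction f using Polynomial.induction_on' with
  | add p q hp hq =>
    rw [map_add, lie_add, hp, hq, ← map_add]
    congr 1
    simp only [mul_add, derivative_add, smul_add]
    abel
  | monomial n c =>
    rw [Lpoly_monomial, lie_smul, 𝔟.lie_L_L_eq_smul (by omega), X_mul_monomial,
      derivative_monomial, smul_monomial, smul_monomial, Nat.add_sub_cancel, ← map_sub,
      Lpoly_monomial, zero_add, smul_smul]
    congr 1
    simp only [smul_eq_mul]
    push_cast
    ring

theorem lie_L_eq_zero_of_forall_ne_zero {n : ℕ}
    (h : ∀ α ≠ 0, ∀ i, n ≤ i → ∀ v : V, ⁅𝔟.L α i, v⁆ = 0) (α : ℤ) {i : ℕ} (hi : 2 * n < i)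
    (v : V) : ⁅𝔟.L α i, v⁆ = 0 := by
  rcases eq_or_ne α 0 with rfl | hα
  · have hbr := 𝔟.lie_L_L_eq_smul (α := 1) (β := -1) (i := n) (j := i - n) (by omega)
    have hc : ((n : ℂ) + 1) * ((-1 : ℤ) : ℂ) - (((i - n : ℕ) : ℂ) + 1) * ((1 : ℤ) : ℂ)
        = -((i + 2 : ℕ) : ℂ) := by
      push_cast [Nat.cast_sub (by omega : n ≤ i)]
      ring
    rw [hc, show (1 : ℤ) + -1 = 0 by norm_num, Nat.add_sub_cancel' (by omega)] at hbr
    have hv := congrArg (⁅·, v⁆) hbr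
    simp only [lie_lie, h 1 one_ne_zero n le_rfl, h (-1) (by norm_num) (i - n) (by omega),
      sub_zero, smul_lie] at hv
    exact (smul_eq_zero.mp hv.symm).resolve_left (neg_ne_zero.mpr (Nat.cast_ne_zero.mpr (by omega)))
  · exact h α hα i (by omega) v

theorem lie_eq_zero_of_mem_filt {m : ℕ} (h : ∀ α i, m ≤ i → ∀ v : V, ⁅𝔟.L α i, v⁆ = 0) {x : B}
    (hx : x ∈ 𝔟.filt m) (v : V) : ⁅x, v⁆ = 0 := by
  have hle : 𝔟.filt m ≤ LinearMap.ker (LieModule.toEnd ℂ B V : B →ₗ[ℂ] Module.End ℂ V) :=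
    Submodule.span_le.mpr (by rintro _ ⟨α, i, hi, rfl⟩; exact LinearMap.ext (h α i hi))
  exact LinearMap.congr_fun (hle hx) v

end BlockData

namespace GradedBMod

variable {𝔟 : BlockData B} (gr : GradedBMod 𝔟 V)

theorem lie_eq_zero_of_forall_mem_piece_s4 {x : B} (h : ∀ k, ∀ v ∈ gr.piece k, ⁅x, v⁆ = 0) (v : V) :
    ⁅x, v⁆ = 0 := by
  have hle : ⨆ k, gr.piece k ≤ LinearMap.ker (LieModule.toEnd ℂ B V x) :=
    iSup_le fun k v hv => h k v hv
  exact hle (by rw [gr.isInternal.submodule_iSup_eq_top]; trivial)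

theorem lie_Lpoly_mem (α : ℤ) (f : ℂ[X]) {k : ℤ} {v : V} (hv : v ∈ gr.piece k) :
    ⁅𝔟.Lpoly α f, v⁆ ∈ gr.piece (α + k) := by
  induction f using Polynomial.induction_on' with
  | add p q hp hq => rw [map_add, add_lie]; exact add_mem hp hq
  | monomial n c =>
    rw [BlockData.Lpoly_monomial, smul_lie]
    exact Submodule.smul_mem _ c (gr.lie_L_mem α n k v hv)

noncomputable def restrictLpoly (α k : ℤ) : ℂ[X] →ₗ[ℂ] gr.piece k →ₗ[ℂ] gr.piece (α + k) where
  toFun f := (LieModule.toEnd ℂ B V (𝔟.Lpoly α f)).restrict fun _ hv => gr.lie_Lpoly_mem α f hv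
  map_add' f g := by
    ext v
    exact (congrArg (⁅·, (v : V)⁆) (map_add _ f g)).trans (add_lie _ _ _)
  map_smul' c f := by
    ext v
    exact (congrArg (⁅·, (v : V)⁆) (map_smul _ c f)).trans (smul_lie _ _ _)

/-- The largest ideal of polynomials `f` such that `𝔟.Lpoly α f` kills `V_k`; for `α ≠ 0` it is the
whole annihilator (`mem_annihilatorIdeal_iff`). -/
def annihilatorIdeal (α k : ℤ) : Ideal ℂ[X] where
  carrier := {f | ∀ g : ℂ[X], ∀ v ∈ gr.piece k, ⁅𝔟.Lpoly α (g * f), v⁆ = 0}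
  add_mem' hf hg g v hv := by rw [mul_add, map_add, add_lie, hf g v hv, hg g v hv, add_zero]
  zero_mem' g v _ := by rw [mul_zero, map_zero, zero_lie]
  smul_mem' c f hf g v hv := by rw [smul_eq_mul, ← mul_assoc]; exact hf (g * c) v hv

theorem lie_Lpoly_eq_zero_of_mem {α k : ℤ} {f : ℂ[X]} (hf : f ∈ gr.annihilatorIdeal α k) {v : V}
    (hv : v ∈ gr.piece k) : ⁅𝔟.Lpoly α f, v⁆ = 0 := by
  simpa using hf 1 v hv

theorem mem_annihilatorIdeal_iff {α : ℤ} (hα : α ≠ 0) {k : ℤ} {f : ℂ[X]} :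
    f ∈ gr.annihilatorIdeal α k ↔ ∀ v ∈ gr.piece k, ⁅𝔟.Lpoly α f, v⁆ = 0 := by
  refine ⟨fun hf v hv => gr.lie_Lpoly_eq_zero_of_mem hf hv, fun hf g => ?_⟩
  have hX : ∀ n v, v ∈ gr.piece k → ⁅𝔟.Lpoly α (X ^ n * f), v⁆ = 0 := by
    intro n
    induction n with
    | zero => simpa using hf
    | succ n ih =>
      intro v hv
      have h2α : (2 * α : ℂ) ≠ 0 := mul_ne_zero two_ne_zero (Int.cast_ne_zero.mpr hα)
      have hL := congrArg (⁅·, v⁆) (𝔟.lie_L_zero_one_Lpoly α (X ^ n * f))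
      have hv' : ⁅𝔟.L 0 1, v⁆ ∈ gr.piece k := by simpa using gr.lie_L_mem 0 1 k v hv
      simp only [lie_lie, ih v hv, ih _ hv', lie_zero, sub_zero, smul_lie] at hL
      rw [pow_succ', mul_assoc]
      exact (smul_eq_zero.mp hL.symm).resolve_left h2α
  induction g using Polynomial.induction_on' with
  | add p q hp hq => intro v hv; rw [add_mul, map_add, add_lie, hp v hv, hq v hv, add_zero]
  | monomial n c =>
    intro v hv
    rw [← C_mul_X_pow_eq_monomial, mul_assoc, ← smul_eq_C_mul, map_smul, smul_lie, hX n v hv,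
      smul_zero]

theorem exists_ne_zero_natDegree_le_mem_annihilatorIdeal {N : ℕ}
    (hN : ∀ k, Module.rank ℂ (gr.piece k) ≤ N) {α : ℤ} (hα : α ≠ 0) (k : ℤ) :
    ∃ f ≠ 0, f.natDegree ≤ N * N ∧ f ∈ gr.annihilatorIdeal α k := by
  have hfin : ∀ k, FiniteDimensional ℂ (gr.piece k) := fun k =>
    Module.rank_lt_aleph0_iff.mp ((hN k).trans_lt Cardinal.natCast_lt_aleph0)
  have hdim : Module.finrank ℂ (gr.piece k →ₗ[ℂ] gr.piece (α + k)) ≤ N * N := by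
    rw [Module.finrank_linearMap]
    exact Nat.mul_le_mul (Module.finrank_le_of_rank_le (hN _))
      (Module.finrank_le_of_rank_le (hN _))
  obtain ⟨f, hf0, hfdeg, hf⟩ :=
    exists_ne_zero_natDegree_le_finrank_apply_eq_zero (gr.restrictLpoly α k)
  refine ⟨f, hf0, hfdeg.trans hdim, (gr.mem_annihilatorIdeal_iff hα).mpr fun v hv => ?_⟩
  exact congrArg Subtype.val (LinearMap.congr_fun hf ⟨v, hv⟩)

theorem smul_sub_smul_derivative_mem_annihilatorIdeal {α β k : ℤ} (hβα : β + α ≠ 0) {q : ℂ[X]}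
    (h₁ : q ∈ gr.annihilatorIdeal α k) (h₂ : q ∈ gr.annihilatorIdeal α (β + k)) :
    (α : ℂ) • q - (β : ℂ) • derivative (X * q) ∈ gr.annihilatorIdeal (β + α) k := by
  refine (gr.mem_annihilatorIdeal_iff hβα).mpr fun v hv => ?_
  rw [← 𝔟.lie_L_zero_Lpoly hβα, lie_lie, gr.lie_Lpoly_eq_zero_of_mem h₁ hv,
    gr.lie_Lpoly_eq_zero_of_mem h₂ (gr.lie_L_mem β 0 k v hv), lie_zero, sub_zero]

theorem annihilatorIdeal_inf_le_span_pow_succ {α β k : ℤ} (hβ : β ≠ 0) (hβα : β + α ≠ 0)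
    {μ : ℂ} (hμ : μ ≠ 0) {e : ℕ} (he : e ≠ 0)
    (h : gr.annihilatorIdeal (β + α) k ≤ Ideal.span {(X - C μ) ^ e}) :
    gr.annihilatorIdeal α k ⊓ gr.annihilatorIdeal α (β + k) ≤ Ideal.span {(X - C μ) ^ (e + 1)} := by
  intro q hq
  have hD : ∀ r ∈ gr.annihilatorIdeal α k ⊓ gr.annihilatorIdeal α (β + k),
      (X - C μ) ^ e ∣ (α : ℂ) • r - (β : ℂ) • derivative (X * r) := fun r hr =>
    Ideal.mem_span_singleton.mp (h (gr.smul_sub_smul_derivative_mem_annihilatorIdeal hβα hr.1 hr.2))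
  exact Ideal.mem_span_singleton.mpr <| pow_succ_dvd_of_pow_dvd_smul_sub_derivative hμ
    (Int.cast_ne_zero.mpr hβ) he (hD q hq) (hD (X * q) (Ideal.mul_mem_left _ X hq))

theorem annihilatorIdeal_not_le_span_X_sub_C {N : ℕ} (hN : ∀ k, Module.rank ℂ (gr.piece k) ≤ N)
    {γ : ℤ} (hγ : γ ≠ 0) (k : ℤ) {μ : ℂ} (hμ : μ ≠ 0) :
    ¬ gr.annihilatorIdeal γ k ≤ Ideal.span {X - C μ} := by
  intro h
  have hpow : ∀ e ≥ 1, ∃ γ ≠ 0, ∃ k, gr.annihilatorIdeal γ k ≤ Ideal.span {(X - C μ) ^ e} := by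
    intro e he
    induction e, he using Nat.le_induction with
    | base => exact ⟨γ, hγ, k, by rwa [pow_one]⟩
    | succ e he ih =>
      obtain ⟨γ, hγ, k, hle⟩ := ih
      have hinf := gr.annihilatorIdeal_inf_le_span_pow_succ (α := -γ) (β := 2 * γ) (k := k)
        (e := e) (by omega) (by omega) hμ (by omega) (by rwa [show 2 * γ + -γ = γ by ring])
      rcases le_span_pow_or_le_span_pow_of_inf_le hinf with hle' | hle'
      exacts [⟨-γ, by omega, k, hle'⟩, ⟨-γ, by omega, 2 * γ + k, hle'⟩]
  obtain ⟨γ', hγ', k', hle⟩ := hpow (N * N + 1) (by omega)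
  obtain ⟨f, hf0, hfdeg, hf⟩ := gr.exists_ne_zero_natDegree_le_mem_annihilatorIdeal hN hγ' k'
  have hdeg := natDegree_le_of_dvd (Ideal.mem_span_singleton.mp (hle hf)) hf0
  rw [natDegree_pow, natDegree_X_sub_C, mul_one] at hdeg
  omega

theorem X_pow_mem_annihilatorIdeal {N : ℕ} (hN : ∀ k, Module.rank ℂ (gr.piece k) ≤ N) {α : ℤ}
    (hα : α ≠ 0) (k : ℤ) {i : ℕ} (hi : N * N ≤ i) : X ^ i ∈ gr.annihilatorIdeal α k := by
  obtain ⟨p, hp⟩ := (IsPrincipalIdealRing.principal (gr.annihilatorIdeal α k)).principal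
  rw [Ideal.submodule_span_eq] at hp
  obtain ⟨f, hf0, hfdeg, hf⟩ := gr.exists_ne_zero_natDegree_le_mem_annihilatorIdeal hN hα k
  rw [hp, Ideal.mem_span_singleton] at hf ⊢
  have hp0 : p ≠ 0 := by rintro rfl; exact hf0 (zero_dvd_iff.mp hf)
  have hroots : ∀ μ, p.IsRoot μ → μ = 0 := fun μ hμ => by
    by_contra hμ0
    apply gr.annihilatorIdeal_not_le_span_X_sub_C hN hα k hμ0
    rw [hp, Ideal.span_singleton_le_span_singleton]
    exact dvd_iff_isRoot.mpr hμ
  exact (dvd_X_pow_natDegree_of_isRoot_imp_eq_zero hp0 hroots).trans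
    (pow_dvd_pow X (((natDegree_le_of_dvd hf hf0).trans hfdeg).trans hi))

theorem lie_L_eq_zero_of_ne_zero_s4 {N : ℕ} (hN : ∀ k, Module.rank ℂ (gr.piece k) ≤ N) {α : ℤ}
    (hα : α ≠ 0) {i : ℕ} (hi : N * N ≤ i) (v : V) : ⁅𝔟.L α i, v⁆ = 0 :=
  gr.lie_eq_zero_of_forall_mem_piece_s4 (fun k _ hv => by
    simpa [BlockData.Lpoly_X_pow] using
      gr.lie_Lpoly_eq_zero_of_mem (gr.X_pow_mem_annihilatorIdeal hN hα k hi) hv) v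

end GradedBMod

theorem block_filtration_acts_trivially_eventually_general
    (𝔟 : BlockData B) (gr : GradedBMod 𝔟 V)
    (hub : gr.UniformlyBounded) :
    ∃ j : ℕ, ∀ x ∈ 𝔟.filt (j + 1), ∀ v : V, ⁅x, v⁆ = 0 := by
  obtain ⟨N, hN⟩ := hub
  refine ⟨2 * (N * N), fun x hx => 𝔟.lie_eq_zero_of_mem_filt (fun α i hi => ?_) hx⟩
  exact 𝔟.lie_L_eq_zero_of_forall_ne_zero
    (fun _ hα _ hi => gr.lie_L_eq_zero_of_ne_zero_s4 hN hα hi) α hi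

/-- Let `V` be an irreducible uniformly bounded ℤ-graded `𝔅`-module. Then
there exists `j ≥ 0` such that `𝔅_[j+1]·V = 0`, where `𝔅_[m] = span{L(α,i) : α ∈ ℤ, i ≥ m}`. -/
theorem block_filtration_acts_trivially_eventually
    (𝔟 : BlockData B) (gr : GradedBMod 𝔟 V)
    (hirr : gr.Irreducible) (hub : gr.UniformlyBounded) :
    ∃ j : ℕ, ∀ x ∈ 𝔟.filt (j + 1), ∀ v : V, ⁅x, v⁆ = 0 :=
  block_filtration_acts_trivially_eventually_general 𝔟 gr hub
end

section
/- The ℂ-bilinear bracket defined on the free ℂ-module with basis {L(α,i) : α ∈ ℤ, i ∈ ℤ, i ≥ 0} ∪ {C} by [L(α,i), L(β,j)] = ((i+1)β − (j+1)α)·L(α+β, i+j) + δ_{α+β,0}·δ_{i+j,0}·((α³−α)/6)·C and [C, x] = 0 for all x is alternating and satisfies the Jacobi identity; hence it determines a Lie algebra structure over ℂ (the Lie algebra 𝔅). -/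
noncomputable section

/-- The free ℂ-module with basis indexed by pairs `(α,i)`, `α ∈ ℤ`, `i ∈ ℕ`
(the elements `L(α,i)`) together with one extra basis element `C`. -/
abbrev FreeB : Type := ((ℤ × ℕ) ⊕ Unit) →₀ ℂ

/-- The basis element `L(α,i)`. -/
def Lgen (α : ℤ) (i : ℕ) : FreeB := Finsupp.single (Sum.inl (α, i)) 1

/-- The basis element `C`. -/
def Cgen : FreeB := Finsupp.single (Sum.inr ()) 1

/-!
The bracket is extended bilinearly from its values on basis vectors, so alternation and the
Jacobi identity only have to be checked on basis vectors. There `C` is central, and on three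
`L`'s the Jacobi identity splits along `L` and `C`: the `L`-component is an identity of
polynomials in the indices, and the `C`-component survives only when `α + β + γ = 0` and
`i = j = k = 0`, where it is the Virasoro cocycle condition for `(α³ − α)/6`.
-/

theorem LinearMap.apply_self_eq_zero_of_flip_eq_neg {R M N : Type*} [CommSemiring R]
    [AddCommMonoid M] [AddCommGroup N] [Module R M] [Module R N] [IsAddTorsionFree N]
    {b : M →ₗ[R] M →ₗ[R] N} (h : b.flip = -b) (x : M) : b x x = 0 :=
  self_eq_neg.mp congr($h x x)

namespace Finsupp

variable {R ι : Type*} [CommSemiring R]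

theorem flip_eq_neg_of_single {M : Type*} [AddCommGroup M] [Module R M]
    {b : (ι →₀ R) →ₗ[R] (ι →₀ R) →ₗ[R] M}
    (h : ∀ a a', b (single a' 1) (single a 1) = -b (single a 1) (single a' 1)) :
    b.flip = -b := by
  ext a a'
  simpa using h a a'

theorem jacobi_of_single {b : (ι →₀ R) →ₗ[R] (ι →₀ R) →ₗ[R] (ι →₀ R)}
    (h : ∀ a a' a'', b (single a 1) (b (single a' 1) (single a'' 1))
      = b (b (single a 1) (single a' 1)) (single a'' 1)
        + b (single a' 1) (b (single a 1) (single a'' 1)))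
    (x y z : ι →₀ R) : b x (b y z) = b (b x y) z + b y (b x z) := by
  -- `ad x ∘ ad y = ad [x, y] + ad y ∘ ad x` as bilinear maps into `Module.End`
  have key : (LinearMap.mul R (Module.End R (ι →₀ R))).compl₁₂ b b
      = b.compr₂ b + ((LinearMap.mul R (Module.End R (ι →₀ R))).compl₁₂ b b).flip := by
    ext a a' a'' : 6
    simpa using h a a' a''
  simpa using congr($key x y z)

end Finsupp

def blockCoeff (α β : ℤ) (i j : ℕ) : ℂ := ((i : ℂ) + 1) * β - ((j : ℂ) + 1) * α

def blockCocycle (α β : ℤ) (i j : ℕ) : ℂ :=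
  if α + β = 0 ∧ i + j = 0 then ((α : ℂ) ^ 3 - α) / 6 else 0

theorem blockCoeff_swap (α β : ℤ) (i j : ℕ) : blockCoeff β α j i = -blockCoeff α β i j := by
  unfold blockCoeff; ring

theorem blockCocycle_swap (α β : ℤ) (i j : ℕ) :
    blockCocycle β α j i = -blockCocycle α β i j := by
  unfold blockCocycle
  by_cases h : α + β = 0 ∧ i + j = 0
  · have hβ : (β : ℂ) = -α := by exact_mod_cast (by omega : β = -α)
    rw [if_pos ⟨by omega, by omega⟩, if_pos h, hβ]
    ring
  · rw [if_neg (by omega), if_neg h, neg_zero]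

theorem blockCoeff_jacobi (α β γ : ℤ) (i j k : ℕ) :
    blockCoeff β γ j k * blockCoeff α (β + γ) i (j + k)
      = blockCoeff α β i j * blockCoeff (α + β) γ (i + j) k
        + blockCoeff α γ i k * blockCoeff β (α + γ) j (i + k) := by
  unfold blockCoeff; push_cast; ring

theorem blockCocycle_jacobi (α β γ : ℤ) (i j k : ℕ) :
    blockCoeff β γ j k * blockCocycle α (β + γ) i (j + k)
      = blockCoeff α β i j * blockCocycle (α + β) γ (i + j) k
        + blockCoeff α γ i k * blockCocycle β (α + γ) j (i + k) := by
  have h₁ : α + (β + γ) = 0 ∧ i + (j + k) = 0 ↔ α + β + γ = 0 ∧ i + j + k = 0 := by omega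
  have h₂ : β + (α + γ) = 0 ∧ j + (i + k) = 0 ↔ α + β + γ = 0 ∧ i + j + k = 0 := by omega
  simp only [blockCocycle, h₁, h₂]
  split_ifs with h
  · obtain ⟨rfl, rfl, rfl⟩ : i = 0 ∧ j = 0 ∧ k = 0 := by omega
    obtain rfl : γ = -α - β := by omega
    simp only [blockCoeff]
    push_cast; ring
  · ring

def blockBracketBasis : (ℤ × ℕ) ⊕ Unit → (ℤ × ℕ) ⊕ Unit → FreeB
  | .inl (α, i), .inl (β, j) =>
      blockCoeff α β i j • Lgen (α + β) (i + j) + blockCocycle α β i j • Cgen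
  | _, _ => 0

def blockBracket : FreeB →ₗ[ℂ] FreeB →ₗ[ℂ] FreeB :=
  Finsupp.linearCombination ℂ fun a => Finsupp.linearCombination ℂ (blockBracketBasis a)

theorem blockBracket_single_single (a a' : (ℤ × ℕ) ⊕ Unit) :
    blockBracket (.single a 1) (.single a' 1) = blockBracketBasis a a' := by
  simp [blockBracket]

theorem blockBracket_Lgen_Lgen (α β : ℤ) (i j : ℕ) :
    blockBracket (Lgen α i) (Lgen β j)
      = blockCoeff α β i j • Lgen (α + β) (i + j) + blockCocycle α β i j • Cgen :=
  blockBracket_single_single _ _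

theorem blockBracket_Cgen_left (x : FreeB) : blockBracket Cgen x = 0 := by
  suffices blockBracket Cgen = 0 from congr($this x)
  ext a
  cases a <;> simp [Cgen, blockBracket_single_single, blockBracketBasis]

theorem blockBracket_Cgen_right (x : FreeB) : blockBracket x Cgen = 0 := by
  suffices blockBracket.flip Cgen = 0 from congr($this x)
  ext a
  rcases a with ⟨α, i⟩ | _ <;> simp [Cgen, blockBracket_single_single, blockBracketBasis]

theorem blockBracketBasis_swap (a a' : (ℤ × ℕ) ⊕ Unit) :
    blockBracketBasis a' a = -blockBracketBasis a a' := by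
  rcases a with ⟨α, i⟩ | _ <;> rcases a' with ⟨β, j⟩ | _ <;>
    simp only [blockBracketBasis, neg_zero]
  rw [blockCoeff_swap, blockCocycle_swap, add_comm β, add_comm j]
  module

theorem blockBracket_single_swap (a a' : (ℤ × ℕ) ⊕ Unit) :
    blockBracket (.single a' 1) (.single a 1) = -blockBracket (.single a 1) (.single a' 1) := by
  rw [blockBracket_single_single, blockBracket_single_single, blockBracketBasis_swap]

theorem blockBracket_jacobi_Lgen (α β γ : ℤ) (i j k : ℕ) :
    blockBracket (Lgen α i) (blockBracket (Lgen β j) (Lgen γ k))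
      = blockBracket (blockBracket (Lgen α i) (Lgen β j)) (Lgen γ k)
        + blockBracket (Lgen β j) (blockBracket (Lgen α i) (Lgen γ k)) := by
  simp only [blockBracket_Lgen_Lgen, map_add, map_smul, LinearMap.add_apply,
    LinearMap.smul_apply, blockBracket_Cgen_left, blockBracket_Cgen_right, smul_zero, add_zero]
  rw [show α + (β + γ) = α + β + γ by ring, show β + (α + γ) = α + β + γ by ring,
    show i + (j + k) = i + j + k by ring, show j + (i + k) = i + j + k by ring]
  linear_combination (norm := module)
    blockCoeff_jacobi α β γ i j k • Lgen (α + β + γ) (i + j + k)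
      + blockCocycle_jacobi α β γ i j k • Cgen

theorem blockBracket_jacobi_single (a a' a'' : (ℤ × ℕ) ⊕ Unit) :
    blockBracket (.single a 1) (blockBracket (.single a' 1) (.single a'' 1))
      = blockBracket (blockBracket (.single a 1) (.single a' 1)) (.single a'' 1)
        + blockBracket (.single a' 1) (blockBracket (.single a 1) (.single a'' 1)) := by
  have hC : (Finsupp.single (Sum.inr ()) 1 : FreeB) = Cgen := rfl
  rcases a with ⟨α, i⟩ | ⟨⟩
  · rcases a' with ⟨β, j⟩ | ⟨⟩
    · rcases a'' with ⟨γ, k⟩ | ⟨⟩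
      · exact blockBracket_jacobi_Lgen α β γ i j k
      · simp only [hC, blockBracket_Cgen_right, map_zero, add_zero]
    · simp only [hC, blockBracket_Cgen_left, blockBracket_Cgen_right, map_zero,
        LinearMap.zero_apply, add_zero]
  · simp only [hC, blockBracket_Cgen_left, map_zero, LinearMap.zero_apply, add_zero]

/-- The ℂ-bilinear bracket defined on the free ℂ-module with basis
`{L(α,i)} ∪ {C}` by `[L(α,i), L(β,j)] = ((i+1)β − (j+1)α)·L(α+β,i+j)
+ δ_{α+β,0}·δ_{i+j,0}·((α³−α)/6)·C` and `[C, x] = 0` is alternating and satisfies the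
Jacobi identity; hence it determines a Lie algebra structure over ℂ (the Lie algebra `𝔅`). -/
theorem block_bracket_is_lie_algebra :
    ∃ b : FreeB →ₗ[ℂ] FreeB →ₗ[ℂ] FreeB,
      (∀ (α β : ℤ) (i j : ℕ),
        b (Lgen α i) (Lgen β j)
          = (((i : ℂ) + 1) * (β : ℂ) - ((j : ℂ) + 1) * (α : ℂ)) • Lgen (α + β) (i + j)
            + (if α + β = 0 ∧ i + j = 0 then ((α : ℂ) ^ 3 - (α : ℂ)) / 6 else 0) • Cgen) ∧
      (∀ x : FreeB, b Cgen x = 0) ∧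
      (∀ x : FreeB, b x x = 0) ∧
      (∀ x y z : FreeB, b x (b y z) = b (b x y) z + b y (b x z)) :=
  ⟨blockBracket, blockBracket_Lgen_Lgen, blockBracket_Cgen_left,
    LinearMap.apply_self_eq_zero_of_flip_eq_neg
      (Finsupp.flip_eq_neg_of_single blockBracket_single_swap),
    Finsupp.jacobi_of_single blockBracket_jacobi_single⟩
end
end

section
/- For every j ≥ 0, the Lie ideal of 𝔅 generated by the single element L(1, j+1) equals 𝔅_[j+1] = span{L(α,i) : α ∈ ℤ, i ≥ j+1}. -/
variable {B : Type} [LieRing B] [LieAlgebra ℂ B]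
variable {V : Type} [AddCommGroup V] [Module ℂ V] [LieRingModule B V] [LieModule ℂ B V]

/-- For every `j ≥ 0`, the Lie ideal of `𝔅` generated by the single element
`L(1, j+1)` equals `𝔅_[j+1] = span{L(α,i) : α ∈ ℤ, i ≥ j+1}`. -/
theorem block_ideal_generated_by_L_one
    (𝔟 : BlockData B) (j : ℕ) :
    ((LieSubmodule.lieSpan ℂ B ({𝔟.L 1 (j + 1)} : Set B) : LieIdeal ℂ B) : Submodule ℂ B)
      = 𝔟.filt (j + 1) := by
  set I : LieIdeal ℂ B := LieSubmodule.lieSpan ℂ B ({𝔟.L 1 (j + 1)} : Set B) with hI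
  -- `filt (j+1)` is an ideal
  have hideal : ∀ x : B, ∀ m ∈ 𝔟.filt (j + 1), ⁅x, m⁆ ∈ 𝔟.filt (j + 1) := by
    intro x m hm
    induction hm using Submodule.span_induction with
    | mem y hy =>
      obtain ⟨α, i, hi, rfl⟩ := hy
      have hx : x ∈ Submodule.span ℂ (Set.range (Sum.elim
          (fun p : ℤ × ℕ => 𝔟.L p.1 p.2) (fun _ : Unit => 𝔟.C))) := by
        rw [𝔟.span_top]; trivial
      induction hx using Submodule.span_induction with
      | mem y' hy' =>
        obtain ⟨s, rfl⟩ := hy'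
        cases s with
        | inl p =>
          rw [Sum.elim_inl, 𝔟.bracket_L]
          have hcond : ¬ (p.1 + α = 0 ∧ p.2 + i = 0) := by
            rintro ⟨-, h2⟩; omega
          rw [if_neg hcond, zero_smul, add_zero]
          exact Submodule.smul_mem _ _
            (Submodule.subset_span ⟨p.1 + α, p.2 + i, by omega, rfl⟩)
        | inr u => simp [𝔟.central]
      | zero => simp
      | add a b _ _ ha hb => rw [add_lie]; exact Submodule.add_mem _ ha hb
      | smul c a _ ha => rw [smul_lie]; exact Submodule.smul_mem _ _ ha
    | zero => simp
    | add a b _ _ ha hb => rw [lie_add]; exact Submodule.add_mem _ ha hb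
    | smul c a _ ha => rw [lie_smul]; exact Submodule.smul_mem _ _ ha
  -- helper: membership after a nonzero scalar
  have hsmul : ∀ (c : ℂ) (x : B), c ≠ 0 → c • x ∈ I → x ∈ I := by
    intro c x hc hx
    have := I.smul_mem c⁻¹ hx
    rwa [smul_smul, inv_mul_cancel₀ hc, one_smul] at this
  have he : 𝔟.L 1 (j + 1) ∈ I := LieSubmodule.subset_lieSpan rfl
  -- L 0 m ∈ I for all m ≥ j+1
  have hzero : ∀ m : ℕ, j + 1 ≤ m → 𝔟.L 0 m ∈ I := by
    intro m hm
    have hb := 𝔟.bracket_L (-1) 1 (m - (j + 1)) (j + 1)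
    have hcond : ¬ ((-1 : ℤ) + 1 = 0 ∧ m - (j + 1) + (j + 1) = 0) := by
      rintro ⟨-, h2⟩; omega
    rw [if_neg hcond, zero_smul, add_zero] at hb
    have hmem : ⁅𝔟.L (-1) (m - (j + 1)), 𝔟.L 1 (j + 1)⁆ ∈ I := I.lie_mem he
    rw [hb] at hmem
    have hidx : (-1 : ℤ) + 1 = 0 := by ring
    have hidx2 : m - (j + 1) + (j + 1) = m := by omega
    rw [hidx, hidx2] at hmem
    refine hsmul _ _ ?_ hmem
    have hc : (((m - (j + 1) : ℕ) : ℂ) + 1) * ((1 : ℤ) : ℂ) - (((j + 1 : ℕ) : ℂ) + 1) * ((-1 : ℤ) : ℂ)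
        = ((m - (j + 1) + j + 3 : ℕ) : ℂ) := by push_cast; ring
    rw [hc]
    exact_mod_cast (by omega : m - (j + 1) + j + 3 ≠ 0)
  -- L α i ∈ I for all α, i ≥ j+1
  have hall : ∀ (α : ℤ) (i : ℕ), j + 1 ≤ i → 𝔟.L α i ∈ I := by
    intro α i hi
    by_cases hα : α = 0
    · subst hα; exact hzero i hi
    · have hf : 𝔟.L 0 (j + 1) ∈ I := hzero (j + 1) le_rfl
      have hb := 𝔟.bracket_L α 0 (i - (j + 1)) (j + 1)
      have hcond : ¬ (α + 0 = 0 ∧ i - (j + 1) + (j + 1) = 0) := by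
        rintro ⟨-, h2⟩; omega
      rw [if_neg hcond, zero_smul, add_zero] at hb
      have hmem : ⁅𝔟.L α (i - (j + 1)), 𝔟.L 0 (j + 1)⁆ ∈ I := I.lie_mem hf
      rw [hb, add_zero, (by omega : i - (j + 1) + (j + 1) = i)] at hmem
      refine hsmul _ _ ?_ hmem
      have hc : (((i - (j + 1) : ℕ) : ℂ) + 1) * ((0 : ℤ) : ℂ) - (((j + 1 : ℕ) : ℂ) + 1) * (α : ℂ)
          = -(((j + 2 : ℕ) : ℂ) * (α : ℂ)) := by push_cast; ring
      rw [hc]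
      refine neg_ne_zero.mpr (mul_ne_zero ?_ ?_)
      · exact_mod_cast (by omega : (j + 2 : ℕ) ≠ 0)
      · exact_mod_cast hα
  apply le_antisymm
  · have hN : I ≤ ({ 𝔟.filt (j + 1) with
        lie_mem := fun {x m} hm => hideal x m hm } : LieIdeal ℂ B) := by
      rw [hI, LieSubmodule.lieSpan_le]
      intro y hy
      rw [Set.mem_singleton_iff] at hy
      subst hy
      exact Submodule.subset_span ⟨1, j + 1, le_rfl, rfl⟩
    exact hN
  · rw [BlockData.filt, Submodule.span_le]
    rintro y ⟨α, i, hi, rfl⟩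
    exact hall α i hi
end

section
/- Let V = ⊕_{k∈ℤ} V_k be a ℤ-graded 𝔅-module. For each a ∈ ℂ the subspace V[a] = ⊕_{k∈ℤ} {v ∈ V_k : L(0,0)·v = (a+k)·v} is a graded 𝔅-submodule of V. Moreover, if V is nonzero, irreducible and quasifinite, then there exists a ∈ ℂ such that V = V[a], i.e. L(0,0) acts on each graded piece V_k as the scalar a+k. -/
variable {B : Type} [LieRing B] [LieAlgebra ℂ B]
variable {V : Type} [AddCommGroup V] [Module ℂ V] [LieRingModule B V] [LieModule ℂ B V]

/-! `L(0,0)` acts on `𝔅^(α)` as multiplication by `α`, so it shifts its eigenvalues on `V`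
exactly as the grading shifts degrees: each `V[a]` is a graded submodule. On a nonzero
quasifinite module, `L(0,0)` has an eigenvector in some finite-dimensional `V_k`, which
therefore lies in some `V[a]`; by irreducibility this `V[a]` is all of `V`. -/

lemma lie_lie_eq_add_smul_of_lie_eq_smul {R L M : Type*} [CommRing R] [LieRing L]
    [LieAlgebra R L] [AddCommGroup M] [Module R M] [LieRingModule L M] [LieModule R L M]
    {x y : L} {v : M} {c d : R} (hy : ⁅x, y⁆ = c • y) (hv : ⁅x, v⁆ = d • v) :
    ⁅x, ⁅y, v⁆⁆ = (c + d) • ⁅y, v⁆ := by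
  rw [leibniz_lie, hy, hv, smul_lie, lie_smul, add_smul]

lemma lie_mem_of_span_eq_top {R L M : Type*} [CommRing R] [LieRing L] [LieAlgebra R L]
    [AddCommGroup M] [Module R M] [LieRingModule L M] [LieModule R L M] {s : Set L}
    (hs : Submodule.span R s = ⊤) (N : Submodule R M) (h : ∀ x ∈ s, ∀ v ∈ N, ⁅x, v⁆ ∈ N)
    (x : L) {v : M} (hv : v ∈ N) : ⁅x, v⁆ ∈ N := by
  have hx : x ∈ Submodule.span R s := hs ▸ Submodule.mem_top
  induction hx using Submodule.span_induction with
  | mem x hx => exact h x hx v hv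
  | zero => simp
  | add x y _ _ hx hy => rw [add_lie]; exact N.add_mem hx hy
  | smul c x _ hx => rw [smul_lie]; exact N.smul_mem c hx

lemma iSupIndep.iSup_inf_eq_of_le {ι α : Type*} [CompleteLattice α] [IsModularLattice α]
    {p S : ι → α} (hp : iSupIndep p) (hS : S ≤ p) (j : ι) : (⨆ k, S k) ⊓ p j = S j := by
  refine le_antisymm ?_ (le_inf (le_iSup S j) (hS j))
  calc (⨆ k, S k) ⊓ p j
      ≤ (S j ⊔ ⨆ (k) (_ : k ≠ j), p k) ⊓ p j := by
        rw [iSup_split_single S j]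
        exact inf_le_inf_right _ (sup_le_sup_left (iSup₂_mono fun k _ => hS k) _)
    _ = S j ⊔ (⨆ (k) (_ : k ≠ j), p k) ⊓ p j := sup_inf_assoc_of_le _ (hS j)
    _ = S j := by rw [disjoint_iff.mp (hp j).symm, sup_bot_eq]

lemma Module.End.exists_inf_eigenspace_ne_bot {K M : Type*} [Field K] [IsAlgClosed K]
    [AddCommGroup M] [Module K M] (f : Module.End K M) {p : Submodule K M}
    [FiniteDimensional K p] (hp : p ≠ ⊥) (hfp : ∀ x ∈ p, f x ∈ p) :
    ∃ μ : K, p ⊓ f.eigenspace μ ≠ ⊥ := by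
  have : Nontrivial p := Submodule.nontrivial_iff_ne_bot.mpr hp
  obtain ⟨μ, hμ⟩ := exists_eigenvalue (f.restrict hfp)
  refine ⟨μ, fun h => hasEigenvalue_iff.mp hμ (eigenspace_restrict_eq_bot hfp ?_)⟩
  rwa [disjoint_iff, inf_comm]

namespace BlockData

variable (𝔟 : BlockData B)

lemma lie_L_zero_zero_L (α : ℤ) (i : ℕ) : ⁅𝔟.L 0 0, 𝔟.L α i⁆ = (α : ℂ) • 𝔟.L α i := by
  rw [𝔟.bracket_L]
  split_ifs with h
  · obtain ⟨rfl, rfl⟩ : α = 0 ∧ i = 0 := by omega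
    simp
  · simp

lemma lie_L_zero_zero_C : ⁅𝔟.L 0 0, 𝔟.C⁆ = (0 : ℂ) • 𝔟.C := by
  rw [← lie_skew, 𝔟.central, neg_zero, zero_smul]

end BlockData

namespace GradedBMod

variable {𝔟 : BlockData B} (gr : GradedBMod 𝔟 V)

/-- The degree-`k` part `{v ∈ V_k : L(0,0)·v = (a+k)·v}` of `V[a]`. -/
def eigenPiece (a : ℂ) (k : ℤ) : Submodule ℂ V :=
  gr.piece k ⊓ (LieModule.toEnd ℂ B V (𝔟.L 0 0)).eigenspace (a + k)

lemma mem_eigenPiece {a : ℂ} {k : ℤ} {v : V} :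
    v ∈ gr.eigenPiece a k ↔ v ∈ gr.piece k ∧ ⁅𝔟.L 0 0, v⁆ = (a + k) • v := by
  rw [eigenPiece, Submodule.mem_inf, Module.End.mem_eigenspace_iff, LieModule.toEnd_apply_apply]

lemma lie_L_mem_eigenPiece (a : ℂ) (α : ℤ) (i : ℕ) (k : ℤ) {v : V}
    (hv : v ∈ gr.eigenPiece a k) : ⁅𝔟.L α i, v⁆ ∈ gr.eigenPiece a (α + k) := by
  obtain ⟨hvk, hva⟩ := gr.mem_eigenPiece.mp hv
  refine gr.mem_eigenPiece.mpr ⟨gr.lie_L_mem α i k v hvk, ?_⟩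
  rw [lie_lie_eq_add_smul_of_lie_eq_smul (𝔟.lie_L_zero_zero_L α i) hva]
  push_cast
  ring_nf

lemma lie_C_mem_eigenPiece (a : ℂ) (k : ℤ) {v : V} (hv : v ∈ gr.eigenPiece a k) :
    ⁅𝔟.C, v⁆ ∈ gr.eigenPiece a k := by
  obtain ⟨hvk, hva⟩ := gr.mem_eigenPiece.mp hv
  refine gr.mem_eigenPiece.mpr ⟨gr.lie_C_mem k v hvk, ?_⟩
  rw [lie_lie_eq_add_smul_of_lie_eq_smul 𝔟.lie_L_zero_zero_C hva, zero_add]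

lemma lie_generator_mem_iSup_eigenPiece (a : ℂ) :
    ∀ x ∈ Set.range (Sum.elim (fun p : ℤ × ℕ => 𝔟.L p.1 p.2) (fun _ : Unit => 𝔟.C)),
      ∀ v ∈ ⨆ k, gr.eigenPiece a k, ⁅x, v⁆ ∈ ⨆ k, gr.eigenPiece a k := by
  rintro _ ⟨s, rfl⟩ v hv
  induction hv using Submodule.iSup_induction' with
  | mem k v hv =>
    cases s with
    | inl p => exact Submodule.mem_iSup_of_mem _ (gr.lie_L_mem_eigenPiece a p.1 p.2 k hv)
    | inr => exact Submodule.mem_iSup_of_mem k (gr.lie_C_mem_eigenPiece a k hv)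
  | zero => simp
  | add v w _ _ hv hw => rw [lie_add]; exact Submodule.add_mem _ hv hw

/-- The graded submodule `V[a]`. -/
def eigenSubmodule (a : ℂ) : LieSubmodule ℂ B V where
  toSubmodule := ⨆ k, gr.eigenPiece a k
  lie_mem {x _} hv :=
    lie_mem_of_span_eq_top 𝔟.span_top _ (gr.lie_generator_mem_iSup_eigenPiece a) x hv

lemma eigenSubmodule_inf_piece (a : ℂ) (k : ℤ) :
    (gr.eigenSubmodule a : Submodule ℂ V) ⊓ gr.piece k = gr.eigenPiece a k :=
  gr.isInternal.submodule_iSupIndep.iSup_inf_eq_of_le (fun _ => inf_le_left) k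

lemma isGradedSubmodule_eigenSubmodule (a : ℂ) : gr.IsGradedSubmodule (gr.eigenSubmodule a) :=
  iSup_congr fun k => (gr.eigenSubmodule_inf_piece a k).symm

lemma exists_eigenPiece_ne_bot (hne : ∃ v : V, v ≠ 0) (hqf : gr.Quasifinite) :
    ∃ a k, gr.eigenPiece a k ≠ ⊥ := by
  obtain ⟨k, hk⟩ : ∃ k, gr.piece k ≠ ⊥ := by
    by_contra! h
    obtain ⟨v, hv⟩ := hne
    have hsup : (⊥ : Submodule ℂ V) = ⊤ := by
      simpa [funext h] using gr.isInternal.submodule_iSup_eq_top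
    exact hv ((Submodule.mem_bot ℂ).mp (hsup ▸ Submodule.mem_top))
  have : FiniteDimensional ℂ (gr.piece k) := hqf k
  obtain ⟨μ, hμ⟩ := (LieModule.toEnd ℂ B V (𝔟.L 0 0)).exists_inf_eigenspace_ne_bot hk
    fun v hv => by simpa using gr.lie_L_mem 0 0 k v hv
  exact ⟨μ - k, k, by simpa [eigenPiece] using hμ⟩

end GradedBMod

/-- For each `a ∈ ℂ` the subspace `V[a] = ⊕ₖ {v ∈ V_k : L(0,0)·v = (a+k)·v}`
is a graded `𝔅`-submodule of `V` (its graded pieces are stable under the action of all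
`L(α,i)` and `C`, with the correct degree shift). Moreover, if `V` is nonzero, irreducible
and quasifinite, then there exists `a ∈ ℂ` such that `V = V[a]`, i.e. `L(0,0)` acts on each
graded piece `V_k` as the scalar `a + k`. -/
theorem block_eigenvalue_decomposition
    (𝔟 : BlockData B) (gr : GradedBMod 𝔟 V) :
    (∀ a : ℂ,
      (∀ (α : ℤ) (i : ℕ) (k : ℤ) (v : V),
        v ∈ gr.piece k ⊓
          Module.End.eigenspace (LieModule.toEnd ℂ B V (𝔟.L 0 0)) (a + (k : ℂ)) →
        ⁅𝔟.L α i, v⁆ ∈ gr.piece (α + k) ⊓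
          Module.End.eigenspace (LieModule.toEnd ℂ B V (𝔟.L 0 0)) (a + ((α + k : ℤ) : ℂ))) ∧
      (∀ (k : ℤ) (v : V),
        v ∈ gr.piece k ⊓
          Module.End.eigenspace (LieModule.toEnd ℂ B V (𝔟.L 0 0)) (a + (k : ℂ)) →
        ⁅𝔟.C, v⁆ ∈ gr.piece k ⊓
          Module.End.eigenspace (LieModule.toEnd ℂ B V (𝔟.L 0 0)) (a + (k : ℂ)))) ∧
    ((∃ v : V, v ≠ 0) → gr.Irreducible → gr.Quasifinite →
      ∃ a : ℂ, ∀ (k : ℤ) (v : V), v ∈ gr.piece k → ⁅𝔟.L 0 0, v⁆ = (a + (k : ℂ)) • v) := by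
  refine ⟨fun a => ⟨fun α i k _ => gr.lie_L_mem_eigenPiece a α i k,
    fun k _ => gr.lie_C_mem_eigenPiece a k⟩, fun hne hirr hqf => ?_⟩
  obtain ⟨a, k₀, hk₀⟩ := gr.exists_eigenPiece_ne_bot hne hqf
  have htop : gr.eigenSubmodule a = ⊤ := by
    refine (hirr.2 _ (gr.isGradedSubmodule_eigenSubmodule a)).resolve_left fun hbot => hk₀ ?_
    rw [← gr.eigenSubmodule_inf_piece, hbot, LieSubmodule.bot_toSubmodule, bot_inf_eq]
  refine ⟨a, fun k v hv => (gr.mem_eigenPiece.mp ?_).2⟩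
  rw [← gr.eigenSubmodule_inf_piece, htop, LieSubmodule.top_toSubmodule, top_inf_eq]
  exact hv
end
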